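/- arXiv:0806.2224 — 6 statements merged into one kernel-verified Lean document; each statement's English description precedes it below -/
import Mathlib

section
/- Fix a real number σ̃ ≥ 0. For all integers k, l ≥ 2, the sum over m from 2 to max(k,l) of B_{k,m}(σ̃)·B'_{m,l}(σ̃) equals 1 if k = l and equals 0 if k ≠ l (equivalently, the lower-triangular matrices B(σ̃) and B'(σ̃) are two-sided inverses of each other). -/
/-!
Write `k = l + n`, `m = l + j` and `x = σ̃ + 2l - 1`. Up to a factor independent of `j`, the
`m`-th term of the product is `(-1)^j C(n,j) (x + 2j) Γ(x+j)/Γ(x+j+n+1)`, and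
`(x + 2j) Γ(x+j) = 2 Γ(x+j+1) - x Γ(x+j)` turns the sum into a combination of `n`-th forward
differences of `y ↦ Γ(y)/Γ(y+s)`. These are explicit, since that function has forward difference
`-s Γ(y)/Γ(y+s+1)`, and the two contributions cancel for `n ≥ 1` because `(n+1)_n = 2 (n)_n`.
-/

open Real Finset

/-- The matrix `B(σ̃)`: `B_{k,l} = (k!/l!)·C(k−1,l−1)·Γ(σ̃+2l)/Γ(σ̃+k+l)`. -/
noncomputable def Bmat (σ : ℝ) (k l : ℕ) : ℝ :=
  ((Nat.factorial k : ℝ) / (Nat.factorial l : ℝ)) * (Nat.choose (k - 1) (l - 1) : ℝ) *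
    Real.Gamma (σ + 2 * l) / Real.Gamma (σ + k + l)

/-- The matrix `B'(σ̃)`: `B'_{k,l} = (−1)^{k+l}·(k!/l!)·C(k−1,l−1)·Γ(σ̃+k+l−1)/Γ(σ̃+2k−1)`. -/
noncomputable def Bmat' (σ : ℝ) (k l : ℕ) : ℝ :=
  (-1 : ℝ) ^ (k + l) * ((Nat.factorial k : ℝ) / (Nat.factorial l : ℝ)) *
    (Nat.choose (k - 1) (l - 1) : ℝ) *
    Real.Gamma (σ + k + l - 1) / Real.Gamma (σ + 2 * k - 1)

open fwdDiff

lemma sum_range_neg_one_pow_mul_choose_eq_fwdDiff_iter {R : Type*} [Ring R]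
    (f : R → R) (n : ℕ) (y : R) :
    ∑ j ∈ range (n + 1), (-1) ^ j * (n.choose j : R) * f (y + j) =
      (-1) ^ n * Δ_[1] ^[n] f y := by
  rw [fwdDiff_iter_eq_sum_shift, mul_sum]
  refine sum_congr rfl fun j hj => ?_
  obtain ⟨i, rfl⟩ := Nat.exists_eq_add_of_le (Nat.lt_succ_iff.mp (mem_range.mp hj))
  have hsign : (-1 : R) ^ j = (-1) ^ (j + i) * (-1) ^ (j + i - j) := by
    rw [Nat.add_sub_cancel_left, pow_add, mul_assoc, ← pow_add, ← two_mul, pow_mul, neg_one_sq,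
      one_pow, mul_one]
  simp [zsmul_eq_mul, hsign, mul_assoc]

noncomputable def gammaRatio (s x : ℝ) : ℝ := Gamma x / Gamma (x + s)

lemma gammaRatio_add_one {s x : ℝ} (hx : x ≠ 0) :
    gammaRatio s (x + 1) = x * gammaRatio (s + 1) x := by
  rw [gammaRatio, gammaRatio, Gamma_add_one hx, add_right_comm, ← add_assoc, mul_div_assoc]

lemma gammaRatio_eq_mul_gammaRatio_add_one {s x : ℝ} (hxs : x + s ≠ 0) :
    gammaRatio s x = (x + s) * gammaRatio (s + 1) x := by
  rw [gammaRatio, gammaRatio, ← add_assoc, Gamma_add_one hxs, ← mul_div_assoc,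
    mul_div_mul_left _ _ hxs]

lemma mul_gammaRatio_one {x : ℝ} (hx : 0 < x) : x * gammaRatio 1 x = 1 := by
  rw [gammaRatio, Gamma_add_one hx.ne', ← mul_div_assoc, mul_div_mul_left _ _ hx.ne',
    div_self (Gamma_pos_of_pos hx).ne']

lemma fwdDiff_gammaRatio {s x : ℝ} (hx : x ≠ 0) (hxs : x + s ≠ 0) :
    Δ_[1] (gammaRatio s) x = -s * gammaRatio (s + 1) x := by
  rw [fwdDiff, gammaRatio_add_one hx, gammaRatio_eq_mul_gammaRatio_add_one hxs]
  ring

lemma fwdDiff_iter_gammaRatio {s : ℝ} (hs : 0 ≤ s) (n : ℕ) {x : ℝ} (hx : 0 < x) :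
    Δ_[1] ^[n] (gammaRatio s) x =
      (-1) ^ n * (ascPochhammer ℝ n).eval s * gammaRatio (s + n) x := by
  induction n generalizing x with
  | zero => simp
  | succ n ih =>
    rw [Function.iterate_succ_apply', fwdDiff, ih (by linarith), ih hx, ← mul_sub,
      ← fwdDiff, fwdDiff_gammaRatio hx.ne' (by positivity), ascPochhammer_succ_eval]
    push_cast
    ring_nf

lemma sum_range_alternating_choose_mul_gammaRatio (n : ℕ) {x : ℝ} (hx : 0 < x) :
    ∑ j ∈ range (n + 1), (-1) ^ j * (n.choose j : ℝ) * ((x + 2 * j) * gammaRatio (n + 1) (x + j))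
      = if n = 0 then 1 else 0 := by
  calc _ = 2 * ∑ j ∈ range (n + 1), (-1) ^ j * (n.choose j : ℝ) * gammaRatio n (x + 1 + j)
        - x * ∑ j ∈ range (n + 1), (-1) ^ j * (n.choose j : ℝ) * gammaRatio (n + 1) (x + j) := by
        rw [mul_sum, mul_sum, ← sum_sub_distrib]
        refine sum_congr rfl fun j _ => ?_
        rw [add_right_comm, gammaRatio_add_one (by positivity)]
        ring
    _ = 2 * ((-1) ^ n * Δ_[1] ^[n] (gammaRatio n) (x + 1))
        - x * ((-1) ^ n * Δ_[1] ^[n] (gammaRatio (n + 1)) x) := by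
        rw [sum_range_neg_one_pow_mul_choose_eq_fwdDiff_iter,
          sum_range_neg_one_pow_mul_choose_eq_fwdDiff_iter]
    _ = if n = 0 then 1 else 0 := by
        rw [fwdDiff_iter_gammaRatio (by positivity) n (by positivity),
          fwdDiff_iter_gammaRatio (by positivity) n hx, gammaRatio_add_one hx.ne']
        -- both terms are multiples of `x Γ(x)/Γ(x+2n+1)`: by `2 (n)_n` and by `(n+1)_n`
        ring_nf
        rw [mul_comm n, pow_mul, neg_one_sq, one_pow]
        split_ifs with hn
        · subst hn
          simp only [Nat.cast_zero, ascPochhammer_zero, Polynomial.eval_one, zero_mul, add_zero]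
          linear_combination mul_gammaRatio_one hx
        · have h := ascPochhammer_eval_succ (S := ℝ) n n
          rw [← two_mul, mul_comm 2, mul_assoc] at h
          rw [add_comm 1 (n : ℝ), mul_left_cancel₀ (Nat.cast_ne_zero.mpr hn) h]
          ring

open scoped Nat

lemma Bmat_eq_zero_of_lt {σ : ℝ} {k m : ℕ} (hk : k ≠ 0) (hkm : k < m) : Bmat σ k m = 0 := by
  simp [Bmat, Nat.choose_eq_zero_of_lt (by omega : k - 1 < m - 1)]

lemma Bmat'_eq_zero_of_lt {σ : ℝ} {m l : ℕ} (hm : m ≠ 0) (hml : m < l) : Bmat' σ m l = 0 := by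
  simp [Bmat', Nat.choose_eq_zero_of_lt (by omega : m - 1 < l - 1)]

lemma Bmat_add_mul_Bmat'_add {σ : ℝ} (hσ : 0 ≤ σ) {l : ℕ} (hl : l ≠ 0) (n j : ℕ) :
    Bmat σ (l + n) (l + j) * Bmat' σ (l + j) l =
      (l + n)! / l ! * (l + n - 1).choose (l - 1) *
        ((-1) ^ j * n.choose j *
          ((σ + 2 * l - 1 + 2 * j) * gammaRatio (n + 1) (σ + 2 * l - 1 + j))) := by
  have hchoose : ((l + n - 1).choose (l + j - 1) * (l + j - 1).choose (l - 1) : ℝ) =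
      (l + n - 1).choose (l - 1) * n.choose j := by
    rw_mod_cast [Nat.choose_mul (by omega), show l + n - 1 - (l - 1) = n by omega,
      show l + j - 1 - (l - 1) = j by omega]
  have hsign : (-1 : ℝ) ^ (l + j + l) = (-1) ^ j := by
    rw [add_right_comm, ← two_mul, pow_add, pow_mul, neg_one_sq, one_pow, one_mul]
  set x := σ + 2 * l - 1
  have hx : 0 < x := by
    have : (1 : ℝ) ≤ l := by exact_mod_cast Nat.one_le_iff_ne_zero.mpr hl
    linarith
  have hx2j : x + 2 * j ≠ 0 := by positivity
  simp only [Bmat, Bmat', gammaRatio, Nat.cast_add, hsign]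
  rw [show σ + 2 * (l + j : ℝ) - 1 = x + 2 * j by ring,
    show σ + 2 * (l + j : ℝ) = x + 2 * j + 1 by ring, show σ + (l + j : ℝ) + l - 1 = x + j by ring,
    show σ + (l + n : ℝ) + (l + j) = x + j + (n + 1) by ring, Gamma_add_one hx2j]
  have hΓ : Gamma (x + 2 * j) ≠ 0 := (Gamma_pos_of_pos (by positivity)).ne'
  field_simp
  linear_combination hchoose

lemma sum_Icc_Bmat_mul_Bmat'_eq_sum_range {σ : ℝ} {l : ℕ} (hl : 2 ≤ l) (n : ℕ) :
    ∑ m ∈ Icc 2 (l + n), Bmat σ (l + n) m * Bmat' σ m l =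
      ∑ j ∈ range (n + 1), Bmat σ (l + n) (l + j) * Bmat' σ (l + j) l := by
  have hvanish : ∀ m ∈ Icc 2 (l + n), m ∉ Icc l (l + n) → Bmat σ (l + n) m * Bmat' σ m l = 0 := by
    intro m hm hml
    simp only [mem_Icc] at hm hml
    rw [Bmat'_eq_zero_of_lt (by omega) (by omega), mul_zero]
  rw [← sum_subset (Icc_subset_Icc_left hl) hvanish, ← Ico_add_one_right_eq_Icc,
    sum_Ico_eq_sum_range, add_assoc, Nat.add_sub_cancel_left]

/-- For `σ̃ ≥ 0` and `k, l ≥ 2`, `∑_{m=2}^{max(k,l)} B_{k,m}(σ̃)·B'_{m,l}(σ̃)` is `1` if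
`k = l` and `0` otherwise: the lower-triangular matrices `B(σ̃)` and `B'(σ̃)` are
two-sided inverses of each other. -/
theorem Bmat_mul_Bmat'_eq_delta (σ : ℝ) (hσ : 0 ≤ σ) (k l : ℕ) (hk : 2 ≤ k) (hl : 2 ≤ l) :
    ∑ m ∈ Finset.Icc 2 (max k l), Bmat σ k m * Bmat' σ m l
      = if k = l then (1 : ℝ) else 0 := by
  rcases lt_or_ge k l with hkl | hlk
  · rw [if_neg hkl.ne, max_eq_right hkl.le]
    refine sum_eq_zero fun m hm => ?_
    have hm2 := (mem_Icc.mp hm).1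
    rcases lt_or_ge k m with hkm | hmk
    · rw [Bmat_eq_zero_of_lt (by omega) hkm, zero_mul]
    · rw [Bmat'_eq_zero_of_lt (by omega) (by omega), mul_zero]
  obtain ⟨n, rfl⟩ := Nat.exists_eq_add_of_le hlk
  have hx : 0 < σ + 2 * l - 1 := by
    have : (2 : ℝ) ≤ l := by exact_mod_cast hl
    linarith
  rw [max_eq_left hlk, sum_Icc_Bmat_mul_Bmat'_eq_sum_range hl,
    sum_congr rfl fun j _ => Bmat_add_mul_Bmat'_add hσ (by omega) n j, ← mul_sum,
    sum_range_alternating_choose_mul_gammaRatio n hx]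
  rcases eq_or_ne n 0 with rfl | hn
  · simp [Nat.factorial_ne_zero]
  · rw [if_neg hn, if_neg (by omega), mul_zero]
end

section
/- Fix a real number σ̃ ≥ 0. For all integers k, l ≥ 2, the sum over m from 2 to k of A_{k,m}(σ̃)·B_{m,l}(σ̃) equals −l(σ̃+l−1)·B_{k,l}(σ̃); i.e., the l-th column of the matrix B(σ̃) is an eigenvector of A(σ̃) with eigenvalue λ_l = −l(σ̃+l−1). -/
open Real Finset

/-- The matrix `A(σ̃)`: `A_{k,l} = k(k−1)` if `k = l+1`, `−k(σ̃+k−1)` if `k = l`,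
and `0` otherwise. -/
noncomputable def Amat (σ : ℝ) (k l : ℕ) : ℝ :=
  if k = l + 1 then (k : ℝ) * ((k : ℝ) - 1)
  else if k = l then -(k : ℝ) * (σ + (k : ℝ) - 1)
  else 0

/-!
Row `k` of `A(σ̃)` has only the entries at `k - 1` and `k`, so, since
`k(σ̃+k−1) − l(σ̃+l−1) = (k−l)(σ̃+k+l−1)`, the eigenvalue equation is the two-term recurrence
`k(k−1) B_{k−1,l} = (k−l)(σ̃+k+l−1) B_{k,l}`. This follows from `Γ(x+1) = xΓ(x)` and
`(k−1) C(k−2, l−1) = (k−l) C(k−1, l−1)`.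
-/

theorem Nat.cast_choose_mul_succ {R : Type*} [CommRing R] (n k : ℕ) :
    (n.choose k : R) * (n + 1) = ((n + 1).choose k : R) * (n + 1 - k) := by
  rcases le_or_gt k (n + 1) with hk | hk
  · have h := congrArg (Nat.cast : ℕ → R) (Nat.choose_mul_succ_eq n k)
    push_cast [Nat.cast_sub hk] at h
    exact h
  · simp [Nat.choose_eq_zero_of_lt hk, Nat.choose_eq_zero_of_lt (Nat.lt_of_succ_lt hk)]

theorem sum_Amat_mul_of_mem (σ : ℝ) (v : ℕ → ℝ) {k : ℕ} {s : Finset ℕ} (hk : 1 ≤ k)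
    (hs : k - 1 ∈ s) (hs' : k ∈ s) :
    ∑ m ∈ s, Amat σ k m * v m = k * (k - 1) * v (k - 1) - k * (σ + k - 1) * v k := by
  have hpair : {k - 1, k} ⊆ s := by simp [insert_subset_iff, hs, hs']
  rw [← sum_subset hpair, sum_pair (by omega)]
  · rw [Amat, if_pos (by omega), Amat, if_neg (by omega), if_pos rfl]
    ring
  · intro m _ hm
    simp only [mem_insert, mem_singleton, not_or] at hm
    rw [Amat, if_neg (by omega), if_neg (by omega), zero_mul]

theorem Bmat_eq_zero_of_lt_s3 (σ : ℝ) {k l : ℕ} (h : k - 1 < l - 1) : Bmat σ k l = 0 := by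
  simp [Bmat, Nat.choose_eq_zero_of_lt h]

theorem Bmat_succ_recurrence (σ : ℝ) {n l : ℕ} (hn : 1 ≤ n) (hl : 1 ≤ l)
    (hx : σ + n + l ≠ 0) :
    (n + 1) * n * Bmat σ n l = (n + 1 - l) * (σ + n + l) * Bmat σ (n + 1) l := by
  have hΓ : Gamma (σ + ↑(n + 1) + l) = (σ + n + l) * Gamma (σ + n + l) := by
    rw [← Gamma_add_one hx]; push_cast; ring_nf
  obtain ⟨m, rfl⟩ : ∃ m, n = m + 1 := ⟨n - 1, by omega⟩
  obtain ⟨b, rfl⟩ : ∃ b, l = b + 1 := ⟨l - 1, by omega⟩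
  have hchoose := Nat.cast_choose_mul_succ (R := ℝ) m b
  simp only [Bmat, hΓ, Nat.factorial_succ, Nat.add_sub_cancel]
  field_simp
  push_cast at hchoose ⊢
  linear_combination ((m + 1 + 1) * ((m + 1) * (m.factorial : ℝ)) * Gamma (σ + 2 * (b + 1)) /
      Gamma (σ + (m + 1) + (b + 1))) * hchoose

/-- For `σ̃ ≥ 0` and `k, l ≥ 2`, `∑_{m=2}^{k} A_{k,m}(σ̃)·B_{m,l}(σ̃) = −l(σ̃+l−1)·B_{k,l}(σ̃)`:
the `l`-th column of `B(σ̃)` is an eigenvector of `A(σ̃)` with eigenvalue `−l(σ̃+l−1)`. -/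
theorem Amat_mul_Bmat_col_eq_eigen (σ : ℝ) (hσ : 0 ≤ σ) (k l : ℕ) (hk : 2 ≤ k) (hl : 2 ≤ l) :
    ∑ m ∈ Finset.Icc 2 k, Amat σ k m * Bmat σ m l
      = (-(l : ℝ) * (σ + (l : ℝ) - 1)) * Bmat σ k l := by
  obtain ⟨n, rfl⟩ : ∃ n, k = n + 1 := ⟨k - 1, by omega⟩
  have hsum : ∑ m ∈ Icc 2 (n + 1), Amat σ (n + 1) m * Bmat σ m l
      = ∑ m ∈ Icc 1 (n + 1), Amat σ (n + 1) m * Bmat σ m l := by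
    rw [← add_sum_Ioc_eq_sum_Icc (show 1 ≤ n + 1 by omega),
      Bmat_eq_zero_of_lt_s3 σ (show 1 - 1 < l - 1 by omega), mul_zero, zero_add]
    rfl
  have hrec := Bmat_succ_recurrence σ (n := n) (l := l) (by omega) (by omega) (by positivity)
  rw [hsum, sum_Amat_mul_of_mem σ _ (by omega) (mem_Icc.2 ⟨by omega, by omega⟩) (by simp)]
  push_cast
  linear_combination hrec
end

section
/- Fix a real number σ̃ > 0. Define, for integers k ≥ l ≥ 2, A'_{k,l}(σ̃) := −(k−1)!·Γ(σ̃+l−1)/(l!·Γ(σ̃+k)), and A'_{k,l}(σ̃) := 0 for k < l. Then for all integers k, l ≥ 2, the sum over m from 2 to max(k,l) of A_{k,m}(σ̃)·A'_{m,l}(σ̃) equals 1 if k = l and 0 if k ≠ l; i.e., A'(σ̃) is a two-sided inverse of the lower-triangular matrix A(σ̃). -/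
open Real Finset

/-- The matrix `A'(σ̃)`: `A'_{k,l} = −(k−1)!·Γ(σ̃+l−1)/(l!·Γ(σ̃+k))` for `k ≥ l`,
and `0` for `k < l`. -/
noncomputable def Amat' (σ : ℝ) (k l : ℕ) : ℝ :=
  if l ≤ k then
    -((Nat.factorial (k - 1) : ℝ) * Real.Gamma (σ + (l : ℝ) - 1) /
      ((Nat.factorial l : ℝ) * Real.Gamma (σ + k)))
  else 0

/-!
`A` is lower bidiagonal, so row `k` of `A * A'` only involves the rows `k - 1` and `k` of `A'`.
On the diagonal the product is `1` by `Γ(s + 1) = s Γ(s)`; below it, the same functional equation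
gives the column recursion `(σ̃ + n) A'_{n+1,l} = n A'_{n,l}`, which is exactly the statement that
the two terms cancel.
-/

variable {σ : ℝ}

lemma Amat_self (k : ℕ) : Amat σ k k = -k * (σ + k - 1) := by
  simp [Amat]

lemma Amat_succ_left (n : ℕ) : Amat σ (n + 1) n = (n + 1) * n := by
  simp [Amat]

lemma Amat_eq_zero_of_lt {k m : ℕ} (h : k < m) : Amat σ k m = 0 := by
  simp [Amat, show k ≠ m + 1 by omega, h.ne]

lemma Amat_eq_zero_of_add_one_lt {k m : ℕ} (h : m + 1 < k) : Amat σ k m = 0 := by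
  simp [Amat, h.ne', show k ≠ m by omega]

lemma Amat'_eq_zero_of_lt {m l : ℕ} (h : m < l) : Amat' σ m l = 0 := by
  simp [Amat', not_le.mpr h]

lemma sum_Icc_Amat_succ_mul {n : ℕ} (hn : 2 ≤ n) (f : ℕ → ℝ) :
    ∑ m ∈ Icc 2 (n + 1), Amat σ (n + 1) m * f m
      = Amat σ (n + 1) n * f n + Amat σ (n + 1) (n + 1) * f (n + 1) := by
  refine sum_eq_add_of_mem n (n + 1) (by simp [hn]) (by simp; omega) (by omega) ?_
  intro m hm ⟨hmn, hmn'⟩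
  rw [Amat_eq_zero_of_add_one_lt (by simp at hm; omega), zero_mul]

lemma Amat_mul_Amat'_self {k : ℕ} (hk : k ≠ 0) (hΓ : Gamma (σ + k - 1) ≠ 0) :
    Amat σ k k * Amat' σ k k = 1 := by
  have hs : σ + k - 1 ≠ 0 := fun h => hΓ (by rw [h, Gamma_zero])
  have hΓk : Gamma (σ + k) = (σ + k - 1) * Gamma (σ + k - 1) := by
    rw [← Gamma_add_one hs, sub_add_cancel]
  have hfac : (k.factorial : ℝ) = k * (k - 1).factorial := by
    exact_mod_cast (Nat.mul_factorial_pred hk).symm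
  have hk' : (k : ℝ) ≠ 0 := by exact_mod_cast hk
  rw [Amat_self, Amat', if_pos le_rfl, hΓk, hfac]
  field_simp

lemma Amat'_succ_mul {n l : ℕ} (hn : n ≠ 0) (hl : l ≤ n) (hΓ : Gamma (σ + n) ≠ 0) :
    (σ + n) * Amat' σ (n + 1) l = n * Amat' σ n l := by
  have hs : σ + n ≠ 0 := fun h => hΓ (by rw [h, Gamma_zero])
  have hΓn : Gamma (σ + ↑(n + 1)) = (σ + n) * Gamma (σ + n) := by
    rw [← Gamma_add_one hs]; push_cast; ring_nf
  have hfac : (n.factorial : ℝ) = n * (n - 1).factorial := by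
    exact_mod_cast (Nat.mul_factorial_pred hn).symm
  rw [Amat', Amat', if_pos (hl.trans n.le_succ), if_pos hl, Nat.add_sub_cancel, hΓn, hfac]
  field_simp

/-- For `σ̃ > 0` and `k, l ≥ 2`, `∑_{m=2}^{max(k,l)} A_{k,m}(σ̃)·A'_{m,l}(σ̃)` equals `1`
if `k = l` and `0` otherwise: `A'(σ̃)` is a two-sided inverse of the lower-triangular
matrix `A(σ̃)`. -/
theorem Amat_mul_Amat'_eq_delta (σ : ℝ) (hσ : 0 < σ) (k l : ℕ) (hk : 2 ≤ k) (hl : 2 ≤ l) :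
    ∑ m ∈ Finset.Icc 2 (max k l), Amat σ k m * Amat' σ m l
      = if k = l then (1 : ℝ) else 0 := by
  rcases lt_trichotomy k l with hkl | rfl | hlk
  · rw [if_neg hkl.ne]
    refine sum_eq_zero fun m _ => ?_
    rcases lt_or_ge m l with hml | hlm
    · rw [Amat'_eq_zero_of_lt hml, mul_zero]
    · rw [Amat_eq_zero_of_lt (hkl.trans_le hlm), zero_mul]
  · rw [if_pos rfl, max_self, sum_eq_single_of_mem k (by simp [hk])]
    · have hpos : 0 < σ + k - 1 := by
        have : (2 : ℝ) ≤ k := by exact_mod_cast hk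
        linarith
      exact Amat_mul_Amat'_self (by omega) (Gamma_pos_of_pos hpos).ne'
    · intro m hm hmk
      rw [Amat'_eq_zero_of_lt (lt_of_le_of_ne (mem_Icc.1 hm).2 hmk), mul_zero]
  · obtain ⟨n, rfl⟩ : ∃ n, k = n + 1 := ⟨k - 1, by omega⟩
    rw [if_neg hlk.ne', max_eq_left hlk.le, sum_Icc_Amat_succ_mul (n := n) (by omega),
      Amat_succ_left, Amat_self]
    have hrec := Amat'_succ_mul (σ := σ) (n := n) (l := l) (by omega) (by omega)
      (Gamma_pos_of_pos (by positivity)).ne'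
    push_cast
    linear_combination -(n + 1 : ℝ) * hrec
end

section
/- For every real number σ̂ > 0 and every integer K ≥ 1, the alternating sum Σ_{m=0}^{K} (−1)^m · (σ̂+2m) · Γ(σ̂+m) / ( m! · (K−m)! · Γ(σ̂+K+m+1) ) equals 0. -/
open Real Finset

/-- For every `σ̂ > 0` and every integer `K ≥ 1`, the alternating sum
`Σ_{m=0}^{K} (−1)^m (σ̂+2m) Γ(σ̂+m) / (m! (K−m)! Γ(σ̂+K+m+1))` equals `0`. -/
theorem alternating_gamma_sum_eq_zero (σ : ℝ) (hσ : 0 < σ) (K : ℕ) (hK : 1 ≤ K) :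
    ∑ m ∈ Finset.range (K + 1),
      (-1 : ℝ) ^ m * (σ + 2 * m) * Real.Gamma (σ + m) /
        ((Nat.factorial m : ℝ) * (Nat.factorial (K - m) : ℝ) *
          Real.Gamma (σ + K + m + 1)) = 0 := by
  set h : ℕ → ℝ := fun m =>
    (-1 : ℝ) ^ m * m * ((K + 1 - m : ℕ) : ℝ) * Real.Gamma (σ + m) /
      ((K : ℝ) * (Nat.factorial m : ℝ) * (Nat.factorial (K + 1 - m) : ℝ) *
        Real.Gamma (σ + K + m)) with hh
  have key : ∀ m ∈ Finset.range (K + 1),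
      (-1 : ℝ) ^ m * (σ + 2 * m) * Real.Gamma (σ + m) /
        ((Nat.factorial m : ℝ) * (Nat.factorial (K - m) : ℝ) *
          Real.Gamma (σ + K + m + 1)) = h m - h (m + 1) := by
    intro m hm
    rw [Finset.mem_range] at hm
    obtain ⟨j, rfl⟩ : ∃ j, K = m + j := ⟨K - m, by omega⟩
    have e1 : m + j - m = j := by omega
    have e2 : m + j + 1 - m = j + 1 := by omega
    have e3 : m + j + 1 - (m + 1) = j := by omega
    simp only [hh, e1, e2, e3]
    have hσm : (0 : ℝ) < σ + m := by positivity
    have hσKm : (0 : ℝ) < σ + (m + j) + m := by positivity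
    have g1 : Real.Gamma (σ + ((m : ℝ) + 1)) = (σ + m) * Real.Gamma (σ + m) := by
      rw [← add_assoc, Real.Gamma_add_one hσm.ne']
    have g2 : Real.Gamma (σ + (m + j) + ((m : ℝ) + 1)) =
        (σ + (m + j) + m) * Real.Gamma (σ + (m + j) + m) := by
      rw [← add_assoc, Real.Gamma_add_one hσKm.ne']
    have hG1 : (0 : ℝ) < Real.Gamma (σ + m) := Real.Gamma_pos_of_pos hσm
    have hG2 : (0 : ℝ) < Real.Gamma (σ + (m + j) + m) := Real.Gamma_pos_of_pos hσKm
    have hKne : ((m + j : ℕ) : ℝ) ≠ 0 := by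
      have : 1 ≤ m + j := hK
      positivity
    have hfm : (0 : ℝ) < (Nat.factorial m : ℝ) := by positivity
    have hfj : (0 : ℝ) < (Nat.factorial j : ℝ) := by positivity
    push_cast [Nat.factorial_succ]
    rw [show σ + ((m : ℝ) + 1) = (σ + m) + 1 by ring, Real.Gamma_add_one hσm.ne',
      show σ + ((m : ℝ) + j) + ((m : ℝ) + 1) = (σ + ((m : ℝ) + j) + m) + 1 by ring,
      Real.Gamma_add_one hσKm.ne']
    have hmj : ((m : ℝ) + j) ≠ 0 := by
      have : (1 : ℝ) ≤ (m : ℝ) + j := by exact_mod_cast hK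
      linarith
    have hj1 : ((j : ℝ) + 1) ≠ 0 := by positivity
    have hm1 : ((m : ℝ) + 1) ≠ 0 := by positivity
    field_simp [hσKm.ne', hG1.ne', hG2.ne', hfm.ne', hfj.ne', hmj, hj1, hm1]
    ring
  rw [Finset.sum_congr rfl key, Finset.sum_range_sub' h]
  simp [hh]
end

section
/- Fix γ > 0 and σ > 0 and set σ̃ := 2σ/γ. Suppose g¹, g², g³, … : [0,∞) → ℝ are differentiable, g¹(t) = 1 for all t ≥ 0, and for every integer n ≥ 2 and all t ≥ 0 one has d/dt gⁿ(t) = (γ/2)·n(n−1)·g^{n−1}(t) − (γ/2)·n·(σ̃+n−1)·gⁿ(t). Then for every integer n ≥ 2 and all t ≥ 0: gⁿ(t) = Γ(n)·Γ(σ̃+1)/Γ(σ̃+n) + n! · Σ_{k=2}^{n} [ binom(n−1, k−1)·(−1)^k·(σ̃+2k−1) / Γ(σ̃+n+k) ] · exp( −k(σ + (γ/2)(k−1))·t ) · ( Σ_{m=2}^{k} [ binom(k−1, m−1)·(−1)^m·Γ(σ̃+k+m−1) / m! ] · g^m(0) − ( (k−1) / ( k·(σ̃+k−1) ) )·Γ(σ̃+k+1)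 ). -/
/-!
The system is triangular: once g^{n-1} is known, gⁿ solves a scalar linear ODE, so by induction
on n a solution is determined by its initial values (multiply the difference of two solutions
by `exp (c t)`). It therefore suffices to check that the closed formula solves the system with
the prescribed initial values.

The formula is a stationary part plus modes `exp (-(γ/2) k (σ̃+k-1) t)`. It solves the ODE
because `n (σ̃+n-1) - k (σ̃+k-1) = (n-k) (σ̃+n+k-1)`, which turns the ODE into a two-term
recurrence in `n` for the mode amplitudes. It has the right initial values because the
amplitude matrix is inverse to the matrix of initial weights and the offsets reproduce the
stationary part; both identities telescope against explicit hypergeometric antidifferences.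
-/

open Real Finset

open scoped Nat

namespace MeanSampleLaplace

section Binomial

variable {R : Type*} [CommRing R]

theorem cast_choose_succ_right_eq (n k : ℕ) :
    (n.choose (k + 1) : R) * (k + 1) = n.choose k * (n - k) := by
  rcases le_or_gt k n with h | h
  · have := congrArg (Nat.cast (R := R)) (Nat.choose_succ_right_eq n k)
    push_cast [Nat.cast_sub h] at this
    exact this
  · rw [Nat.choose_eq_zero_of_lt h, Nat.choose_eq_zero_of_lt (by omega)]
    simp

theorem cast_choose_mul_succ_eq (n k : ℕ) :
    (n.choose k : R) * (n + 1) = (n + 1).choose k * (n + 1 - k) := by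
  rcases le_or_gt k (n + 1) with h | h
  · have := congrArg (Nat.cast (R := R)) (Nat.choose_mul_succ_eq n k)
    push_cast [Nat.cast_sub h] at this
    exact this
  · rw [Nat.choose_eq_zero_of_lt (by omega), Nat.choose_eq_zero_of_lt h]
    simp

end Binomial

theorem Gamma_eq_sub_one_mul {x : ℝ} (hx : x ≠ 1) : Gamma x = (x - 1) * Gamma (x - 1) := by
  simpa using Real.Gamma_add_one (sub_ne_zero.2 hx)

theorem eq_zero_of_hasDerivWithinAt_neg_mul {f : ℝ → ℝ} {c : ℝ}
    (hf : ∀ t, 0 ≤ t → HasDerivWithinAt f (-c * f t) (Set.Ici 0) t) (h0 : f 0 = 0) {t : ℝ}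
    (ht : 0 ≤ t) : f t = 0 := by
  have hderiv : ∀ u, 0 ≤ u →
      HasDerivWithinAt (fun v => exp (c * v) * f v) 0 (Set.Ici 0) u := by
    intro u hu
    have he : HasDerivAt (fun v => exp (c * v)) (exp (c * u) * c) u := by
      simpa using ((hasDerivAt_id u).const_mul c).exp
    exact (he.hasDerivWithinAt.mul (hf u hu)).congr_deriv (by ring)
  have hconst := constant_of_has_deriv_right_zero
    (fun u hu => (hderiv u hu.1).continuousWithinAt.mono Set.Icc_subset_Ici_self)
    (fun u hu => (hderiv u hu.1).mono (Set.Ici_subset_Ici.2 hu.1)) t ⟨ht, le_rfl⟩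
  simpa [h0, exp_ne_zero] using hconst

structure IsSolution (γ s : ℝ) (g : ℕ → ℝ → ℝ) : Prop where
  one : ∀ t, 0 ≤ t → g 1 t = 1
  hasDerivWithinAt : ∀ n, 2 ≤ n → ∀ t, 0 ≤ t → HasDerivWithinAt (g n)
    (γ / 2 * n * (n - 1) * g (n - 1) t - γ / 2 * n * (s + n - 1) * g n t) (Set.Ici 0) t

theorem IsSolution.unique {γ s : ℝ} {g h : ℕ → ℝ → ℝ} (hg : IsSolution γ s g)
    (hh : IsSolution γ s h) (h0 : ∀ n, 2 ≤ n → g n 0 = h n 0) :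
    ∀ n, 1 ≤ n → ∀ t, 0 ≤ t → g n t = h n t := by
  intro n hn
  induction n, hn using Nat.le_induction with
  | base => intro t ht; rw [hg.one t ht, hh.one t ht]
  | succ n hn ih =>
    intro t ht
    refine sub_eq_zero.1 (eq_zero_of_hasDerivWithinAt_neg_mul
      (f := fun t => g (n + 1) t - h (n + 1) t) (c := γ / 2 * (n + 1) * (s + n))
      (fun u hu => ?_) (sub_eq_zero.2 (h0 (n + 1) (by omega))) ht)
    refine ((hg.hasDerivWithinAt (n + 1) (by omega) u hu).sub
      (hh.hasDerivWithinAt (n + 1) (by omega) u hu)).congr_deriv ?_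
    rw [Nat.add_sub_cancel, ih u hu]
    push_cast
    ring

noncomputable def stationaryValue (s : ℝ) (n : ℕ) : ℝ :=
  Gamma n * Gamma (s + 1) / Gamma (s + n)

noncomputable def decayRate (γ s : ℝ) (k : ℕ) : ℝ :=
  γ / 2 * k * (s + k - 1)

noncomputable def amplitude (s : ℝ) (n k : ℕ) : ℝ :=
  ((n - 1).choose (k - 1) : ℝ) * (-1) ^ k * (s + 2 * k - 1) / Gamma (s + n + k)

noncomputable def initialWeight (s : ℝ) (k m : ℕ) : ℝ :=
  ((k - 1).choose (m - 1) : ℝ) * (-1) ^ m * Gamma (s + k + m - 1) / (m ! : ℝ)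

noncomputable def offset (s : ℝ) (k : ℕ) : ℝ :=
  ((k : ℝ) - 1) / (k * (s + k - 1)) * Gamma (s + k + 1)

noncomputable def modeCoeff (s : ℝ) (x : ℕ → ℝ) (k : ℕ) : ℝ :=
  ∑ m ∈ Icc 2 k, initialWeight s k m * x m - offset s k

noncomputable def mode (γ s : ℝ) (x : ℕ → ℝ) (k : ℕ) (t : ℝ) : ℝ :=
  exp (-decayRate γ s k * t) * modeCoeff s x k

noncomputable def explicitSolution (γ s : ℝ) (x : ℕ → ℝ) (n : ℕ) (t : ℝ) : ℝ :=
  stationaryValue s n + n ! * ∑ k ∈ Icc 2 n, amplitude s n k * mode γ s x k t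

theorem amplitude_eq_zero_of_lt (s : ℝ) {n k : ℕ} (hn : 1 ≤ n) (hnk : n < k) :
    amplitude s n k = 0 := by
  simp [amplitude, Nat.choose_eq_zero_of_lt (show n - 1 < k - 1 by omega)]

theorem initialWeight_eq_zero_of_lt (s : ℝ) {k m : ℕ} (hk : 1 ≤ k) (hkm : k < m) :
    initialWeight s k m = 0 := by
  simp [initialWeight, Nat.choose_eq_zero_of_lt (show k - 1 < m - 1 by omega)]

theorem hasDerivAt_mode (γ s : ℝ) (x : ℕ → ℝ) (k : ℕ) (t : ℝ) :
    HasDerivAt (mode γ s x k) (-decayRate γ s k * mode γ s x k t) t :=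
  (((hasDerivAt_id t).const_mul _).exp.mul_const _).congr_deriv (by simp only [mode, id]; ring)

theorem mul_stationaryValue_succ {s : ℝ} (hs : 0 < s) {n : ℕ} (hn : 1 ≤ n) :
    (s + n) * stationaryValue s (n + 1) = n * stationaryValue s n := by
  unfold stationaryValue
  push_cast
  rw [Real.Gamma_add_one (s := n) (by positivity), ← add_assoc,
    Real.Gamma_add_one (s := s + n) (by positivity)]
  have := (Real.Gamma_pos_of_pos (show 0 < s + n by positivity)).ne'
  field_simp

theorem mul_amplitude_succ {s : ℝ} (hs : 0 < s) {n k : ℕ} (hn : 1 ≤ n) (hk : 1 ≤ k) :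
    (n + 1 - k) * (s + n + k) * amplitude s (n + 1) k = n * amplitude s n k := by
  obtain ⟨p, rfl⟩ := Nat.exists_eq_add_of_le' hn
  obtain ⟨j, rfl⟩ := Nat.exists_eq_add_of_le' hk
  have hchoose := cast_choose_mul_succ_eq (R := ℝ) p j
  unfold amplitude
  simp only [Nat.add_sub_cancel]
  push_cast
  rw [show s + (p + 1 + 1) + (j + 1) = (s + (p + 1) + (j + 1)) + 1 by ring,
    Real.Gamma_add_one (by positivity)]
  have := (Real.Gamma_pos_of_pos (show 0 < s + (p + 1) + (j + 1) by positivity)).ne'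
  field_simp
  linear_combination -(s + 2 * (j + 1) - 1) * hchoose

theorem hasDerivAt_explicitSolution_succ {γ s : ℝ} (hs : 0 < s) (x : ℕ → ℝ) {n : ℕ}
    (hn : 1 ≤ n) (t : ℝ) :
    HasDerivAt (explicitSolution γ s x (n + 1))
      (γ / 2 * (n + 1) * n * explicitSolution γ s x n t
        - γ / 2 * (n + 1) * (s + n) * explicitSolution γ s x (n + 1) t) t := by
  refine (((HasDerivAt.fun_sum fun k _ => (hasDerivAt_mode γ s x k t).const_mul
    (amplitude s (n + 1) k)).const_mul ((n + 1)! : ℝ)).const_add _).congr_deriv ?_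
  have hlower : ∑ k ∈ Icc 2 n, amplitude s n k * mode γ s x k t
      = ∑ k ∈ Icc 2 (n + 1), amplitude s n k * mode γ s x k t := by
    rw [sum_Icc_succ_top (by omega), amplitude_eq_zero_of_lt s hn (by omega), zero_mul, add_zero]
  have hmodes : (n + 1)! * ∑ k ∈ Icc 2 (n + 1),
        amplitude s (n + 1) k * (-decayRate γ s k * mode γ s x k t)
      = γ / 2 * (n + 1) * n * (n ! * ∑ k ∈ Icc 2 (n + 1), amplitude s n k * mode γ s x k t)
        - γ / 2 * (n + 1) * (s + n)
          * ((n + 1)! * ∑ k ∈ Icc 2 (n + 1), amplitude s (n + 1) k * mode γ s x k t) := by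
    simp only [mul_sum, ← sum_sub_distrib]
    refine sum_congr rfl fun k hk => ?_
    have hrec := mul_amplitude_succ hs hn (k := k) (by rw [mem_Icc] at hk; omega)
    rw [Nat.factorial_succ, decayRate]
    push_cast
    linear_combination (γ / 2 * (n + 1) * n ! * mode γ s x k t) * hrec
  rw [explicitSolution, explicitSolution, hlower]
  linear_combination hmodes + γ / 2 * (n + 1) * mul_stationaryValue_succ hs hn

theorem explicitSolution_one (γ : ℝ) {s : ℝ} (hs : 0 < s) (x : ℕ → ℝ) (t : ℝ) :
    explicitSolution γ s x 1 t = 1 := by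
  have := (Real.Gamma_pos_of_pos (show 0 < s + 1 by positivity)).ne'
  simp [explicitSolution, stationaryValue, this]

theorem isSolution_explicitSolution (γ : ℝ) {s : ℝ} (hs : 0 < s) (x : ℕ → ℝ) :
    IsSolution γ s (explicitSolution γ s x) where
  one t _ := explicitSolution_one γ hs x t
  hasDerivWithinAt n hn t _ := by
    obtain ⟨p, rfl⟩ := Nat.exists_eq_add_of_le' (show 1 ≤ n by omega)
    refine (hasDerivAt_explicitSolution_succ hs x (by omega) t).hasDerivWithinAt.congr_deriv ?_
    push_cast
    ring

noncomputable def weightAntidiff (s : ℝ) (n m k : ℕ) : ℝ :=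
  (-1) ^ (k + m + 1) * ((k : ℝ) - m) * ((n - 1).choose (k - 1) : ℝ)
      * ((k - 1).choose (m - 1) : ℝ) * Gamma (s + k + m - 1)
    / (((n : ℝ) - m) * (m ! : ℝ) * Gamma (s + n + k - 1))

theorem amplitude_mul_initialWeight_eq_sub {s : ℝ} (hs : 0 < s) {n k m : ℕ} (hn : 1 ≤ n)
    (hk : 1 ≤ k) (hm : 1 ≤ m) (hmn : m ≠ n) :
    amplitude s n k * initialWeight s k m
      = weightAntidiff s n m (k + 1) - weightAntidiff s n m k := by
  have hc1 := cast_choose_succ_right_eq (R := ℝ) (n - 1) (k - 1)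
  have hc2 := cast_choose_mul_succ_eq (R := ℝ) (k - 1) (m - 1)
  rw [Nat.sub_add_cancel hk] at hc1 hc2
  push_cast [Nat.cast_sub hn, Nat.cast_sub hk, Nat.cast_sub hm] at hc1 hc2
  unfold amplitude initialWeight weightAntidiff
  simp only [Nat.add_sub_cancel]
  push_cast
  have hcombo : ((k : ℝ) + 1 - m) * ((n - 1).choose k : ℝ) * (k.choose (m - 1) : ℝ)
      = ((n : ℝ) - k) * ((n - 1).choose (k - 1) : ℝ) * ((k - 1).choose (m - 1) : ℝ) := by
    linear_combination ((k - 1).choose (m - 1) : ℝ) * hc1 - ((n - 1).choose k : ℝ) * hc2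
  have hk' : (1 : ℝ) ≤ k := by exact_mod_cast hk
  have hm' : (1 : ℝ) ≤ m := by exact_mod_cast hm
  have hmn' : (n : ℝ) - m ≠ 0 := sub_ne_zero.2 (by exact_mod_cast hmn.symm)
  rw [show s + (k + 1) + m - 1 = (s + k + m - 1) + 1 by ring, Real.Gamma_add_one (by linarith),
    show s + n + (k + 1) - 1 = s + n + k by ring,
    Gamma_eq_sub_one_mul (x := s + n + k) (by linarith)]
  have := (Real.Gamma_pos_of_pos (show 0 < s + n + k - 1 by linarith)).ne'
  have := (Real.Gamma_pos_of_pos (show 0 < s + k + m - 1 by linarith)).ne'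
  have : s + n + k - 1 ≠ 0 := by linarith
  field_simp
  linear_combination -(s + k + m - 1) * (-1) ^ (k + m) * hcombo

theorem amplitude_self_mul_initialWeight_self {s : ℝ} (hs : 0 < s) {n : ℕ} (hn : 1 ≤ n) :
    amplitude s n n * initialWeight s n n = (n ! : ℝ)⁻¹ := by
  have hn' : (1 : ℝ) ≤ n := by exact_mod_cast hn
  have hpos : 0 < s + n + n - 1 := by linarith
  unfold amplitude initialWeight
  rw [Nat.choose_self, Gamma_eq_sub_one_mul (x := s + n + n) (by linarith)]
  have := (Real.Gamma_pos_of_pos hpos).ne'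
  have hsq : ((-1 : ℝ) ^ n) * (-1) ^ n = 1 := by rw [← mul_pow]; norm_num
  field_simp
  linear_combination (s + 2 * n - 1) * hsq

theorem sum_amplitude_mul_initialWeight {s : ℝ} (hs : 0 < s) {n m : ℕ} (hm : 2 ≤ m)
    (hmn : m ≤ n) :
    ∑ k ∈ Icc 2 n, amplitude s n k * initialWeight s k m
      = if m = n then (n ! : ℝ)⁻¹ else 0 := by
  split_ifs with h
  · subst h
    rw [sum_eq_single_of_mem m (right_mem_Icc.2 hm) fun k hk hkm => ?_,
      amplitude_self_mul_initialWeight_self hs (by omega)]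
    rw [mem_Icc] at hk
    rw [initialWeight_eq_zero_of_lt s (by omega) (by omega), mul_zero]
  · rw [sum_congr rfl fun k hk => amplitude_mul_initialWeight_eq_sub hs (by omega)
      (by rw [mem_Icc] at hk; omega) (by omega) h, sum_Icc_sub (by omega)]
    rcases hm.eq_or_lt with rfl | hm
    · simp [weightAntidiff, Nat.choose_eq_zero_of_lt (show n - 1 < n by omega)]
    · simp [weightAntidiff, Nat.choose_eq_zero_of_lt (show n - 1 < n by omega),
        Nat.choose_eq_zero_of_lt (show 1 < m - 1 by omega)]

noncomputable def offsetAntidiff (s : ℝ) (n k : ℕ) : ℝ :=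
  (-1) ^ k * ((n : ℝ) - k) * (n * k ^ 2 + n * s * k - (n - 1) * s)
      * ((n - 1).choose (k - 1) : ℝ) * Gamma (s + k)
    / (n * (n - 1) * k * Gamma (s + n + k))

theorem amplitude_mul_offset_eq_sub {s : ℝ} (hs : 0 < s) {n k : ℕ} (hn : 2 ≤ n)
    (hk : 2 ≤ k) :
    amplitude s n k * offset s k = offsetAntidiff s n k - offsetAntidiff s n (k - 1) := by
  obtain ⟨j, rfl⟩ := Nat.exists_eq_add_of_le' (show 1 ≤ k by omega)
  have hj : (1 : ℝ) ≤ j := by exact_mod_cast (show 1 ≤ j by omega)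
  have hn' : (2 : ℝ) ≤ n := by exact_mod_cast hn
  have hc := cast_choose_succ_right_eq (R := ℝ) (n - 1) (j - 1)
  rw [Nat.sub_add_cancel (show 1 ≤ j by omega)] at hc
  push_cast [Nat.cast_sub (show 1 ≤ n by omega), Nat.cast_sub (show 1 ≤ j by omega)] at hc
  unfold amplitude offset offsetAntidiff
  simp only [Nat.add_sub_cancel]
  push_cast
  rw [show s + n + (j + 1) = s + n + j + 1 by ring, show s + (j + 1) = s + j + 1 by ring,
    Real.Gamma_add_one (s := s + n + j) (by positivity),
    Real.Gamma_add_one (s := s + j + 1) (by positivity),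
    Real.Gamma_add_one (s := s + j) (by positivity)]
  have := (Real.Gamma_pos_of_pos (show 0 < s + j by positivity)).ne'
  have := (Real.Gamma_pos_of_pos (show 0 < s + n + j by positivity)).ne'
  have : (n : ℝ) - 1 ≠ 0 := by linarith
  have : (j : ℝ) ≠ 0 := by linarith
  have : (n : ℝ) ≠ 0 := by linarith
  have : s + j ≠ 0 := by linarith
  have : s + n + j ≠ 0 := by linarith
  have : s + j + 1 - 1 ≠ 0 := by linarith
  field_simp
  linear_combination
    -((s + j) * (j + 1) * (s + n + j) * (-1) ^ j * (j * n * (j + s) - s * (n - 1))) * hc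

theorem sum_amplitude_mul_offset {s : ℝ} (hs : 0 < s) {n : ℕ} (hn : 2 ≤ n) :
    ∑ k ∈ Icc 2 n, amplitude s n k * offset s k = stationaryValue s n / n ! := by
  have htele := sum_Icc_sub (f := fun k => offsetAntidiff s n (k - 1)) (show 2 ≤ n by omega)
  simp only [Nat.add_sub_cancel] at htele
  rw [sum_congr rfl fun k hk => amplitude_mul_offset_eq_sub hs hn (by rw [mem_Icc] at hk; omega),
    htele]
  obtain ⟨p, rfl⟩ := Nat.exists_eq_add_of_le' (show 1 ≤ n by omega)
  have hlast : offsetAntidiff s (p + 1) (p + 1) = 0 := by simp [offsetAntidiff]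
  have hfirst : offsetAntidiff s (p + 1) 1 = -(Gamma (s + 1) / ((p + 1) * Gamma (s + p + 1))) := by
    unfold offsetAntidiff
    push_cast
    rw [← add_assoc, Real.Gamma_add_one (s := s + p + 1) (by positivity)]
    have := (Real.Gamma_pos_of_pos (show 0 < s + p + 1 by positivity)).ne'
    have : (p : ℝ) ≠ 0 := by exact_mod_cast (show p ≠ 0 by omega)
    simp only [Nat.choose_zero_right, Nat.cast_one, add_sub_cancel_right]
    field_simp
    ring
  rw [hlast, Nat.add_one_sub_one, hfirst, stationaryValue, Nat.factorial_succ]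
  push_cast
  rw [Real.Gamma_nat_eq_factorial, ← add_assoc]
  field_simp
  ring

theorem explicitSolution_at_zero {γ s : ℝ} (hs : 0 < s) (x : ℕ → ℝ) {n : ℕ}
    (hn : 2 ≤ n) :
    explicitSolution γ s x n 0 = x n := by
  have hmodes : ∑ k ∈ Icc 2 n, amplitude s n k * modeCoeff s x k
      = x n / (n ! : ℝ) - ∑ k ∈ Icc 2 n, amplitude s n k * offset s k := by
    calc ∑ k ∈ Icc 2 n, amplitude s n k * modeCoeff s x k
        = ∑ k ∈ Icc 2 n, ∑ m ∈ Icc 2 n, amplitude s n k * initialWeight s k m * x m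
          - ∑ k ∈ Icc 2 n, amplitude s n k * offset s k := by
          rw [← sum_sub_distrib]
          refine sum_congr rfl fun k hk => ?_
          rw [modeCoeff, mul_sub, mul_sum, ← sum_subset (Icc_subset_Icc_right (mem_Icc.1 hk).2)]
          · simp only [mul_assoc]
          · intro m hm hmk
            simp only [mem_Icc, not_and, not_le] at hk hm hmk
            rw [initialWeight_eq_zero_of_lt s (by omega) (hmk hm.1), mul_zero, zero_mul]
      _ = ∑ m ∈ Icc 2 n, (if m = n then (n ! : ℝ)⁻¹ else 0) * x m
          - ∑ k ∈ Icc 2 n, amplitude s n k * offset s k := by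
          rw [sum_comm]
          congr 1
          refine sum_congr rfl fun m hm => ?_
          rw [← sum_amplitude_mul_initialWeight hs (mem_Icc.1 hm).1 (mem_Icc.1 hm).2, sum_mul]
      _ = x n / (n ! : ℝ) - ∑ k ∈ Icc 2 n, amplitude s n k * offset s k := by
          simp [hn, div_eq_inv_mul]
  simp only [explicitSolution, mode, mul_zero, exp_zero, one_mul]
  rw [hmodes, sum_amplitude_mul_offset hs hn]
  field_simp
  ring

end MeanSampleLaplace

/-- Explicit solution of the ODE system for the mean sample Laplace transforms of subtree
lengths under the tree-valued Fleming–Viot dynamics with resampling rate `γ`: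
if `g¹ ≡ 1` and `d/dt gⁿ = (γ/2)n(n−1)g^{n−1} − (γ/2)n(σ̃+n−1)gⁿ` on `[0,∞)` for all
`n ≥ 2`, where `σ̃ = 2σ/γ`, then `gⁿ(t)` is given by the stated closed formula. -/
theorem meanSampleLaplace_explicit_solution
    (γ σ : ℝ) (hγ : 0 < γ) (hσ : 0 < σ)
    (g : ℕ → ℝ → ℝ)
    (hg1 : ∀ t : ℝ, 0 ≤ t → g 1 t = 1)
    (hode : ∀ n : ℕ, 2 ≤ n → ∀ t : ℝ, 0 ≤ t →
      HasDerivWithinAt (g n)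
        (γ / 2 * (n : ℝ) * ((n : ℝ) - 1) * g (n - 1) t
          - γ / 2 * (n : ℝ) * (2 * σ / γ + (n : ℝ) - 1) * g n t)
        (Set.Ici 0) t)
    (n : ℕ) (hn : 2 ≤ n) (t : ℝ) (ht : 0 ≤ t) :
    g n t
      = Real.Gamma n * Real.Gamma (2 * σ / γ + 1) / Real.Gamma (2 * σ / γ + n)
        + (Nat.factorial n : ℝ) *
          ∑ k ∈ Finset.Icc 2 n,
            ((Nat.choose (n - 1) (k - 1) : ℝ) * (-1) ^ k * (2 * σ / γ + 2 * k - 1)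
                / Real.Gamma (2 * σ / γ + n + k))
              * Real.exp (-((k : ℝ) * (σ + γ / 2 * ((k : ℝ) - 1))) * t)
              * ((∑ m ∈ Finset.Icc 2 k,
                    ((Nat.choose (k - 1) (m - 1) : ℝ) * (-1) ^ m
                        * Real.Gamma (2 * σ / γ + k + m - 1) / (Nat.factorial m : ℝ))
                      * g m 0)
                  - ((k : ℝ) - 1) / ((k : ℝ) * (2 * σ / γ + (k : ℝ) - 1))
                      * Real.Gamma (2 * σ / γ + k + 1)) := by
  open MeanSampleLaplace in
  have hs : 0 < 2 * σ / γ := by positivity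
  have hsol := IsSolution.unique ⟨hg1, hode⟩ (isSolution_explicitSolution γ hs fun m => g m 0)
    (fun m hm => (explicitSolution_at_zero hs (fun m => g m 0) hm).symm) n (by omega) t ht
  have hrate (k : ℕ) : decayRate γ (2 * σ / γ) k = k * (σ + γ / 2 * (k - 1)) := by
    unfold decayRate
    field_simp
    ring
  simp only [hsol, explicitSolution, stationaryValue, amplitude, mode, modeCoeff, initialWeight,
    offset, hrate, mul_assoc]
end

section
/- Fix γ > 0 and σ > 0 and set σ̃ := 2σ/γ. Suppose g¹, g², g³, … : [0,∞) → ℝ are differentiable, g¹(t) = 1 for all t ≥ 0, and for every integer n ≥ 2 and all t ≥ 0 one has d/dt gⁿ(t) = (γ/2)·n(n−1)·g^{n−1}(t) − (γ/2)·n·(σ̃+n−1)·gⁿ(t). Then for every integer n ≥ 2, gⁿ(t) converges as t → ∞ to Γ(n)·Γ(σ̃+1)/Γ(σ̃+n). -/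
open Real Finset Filter

/-!
Each `gⁿ` solves the scalar linear equation `u' = h - b u` with forcing
`h = (γ/2)n(n-1)·g^{n-1}` and rate `b = (γ/2)n(σ̃+n-1) > 0`. Comparing `u` with the exact
solutions of `v' = b c - b v` shows that `u → L / b` whenever `h → L`. So by induction on
`n` every `gⁿ` converges, and the limits obey `E¹ = 1`, `Eⁿ = (n-1)/(σ̃+n-1) · E^{n-1}`,
which the Gamma quotient solves by `Γ(x+1) = x Γ(x)`.
-/

theorem le_of_hasDerivWithinAt_sub_mul_of_lt {u k : ℝ → ℝ} {a b c : ℝ}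
    (hu : ∀ t, a ≤ t → HasDerivWithinAt u (k t - b * u t) (Set.Ici a) t)
    (hk : ∀ t, a ≤ t → k t < b * c) :
    ∀ t, a ≤ t → u t ≤ c + (u a - c) * exp (-(b * (t - a))) := by
  set B : ℝ → ℝ := fun x => c + (u a - c) * exp (-(b * (x - a)))
  have hB : ∀ x, HasDerivAt B (-(b * (B x - c))) x := fun x => by
    have := ((((hasDerivAt_id x).sub_const a).const_mul b).neg.exp.const_mul (u a - c)).const_add c
    simp only [Pi.neg_apply, id] at this
    exact this.congr_deriv (by simp only [B]; ring)
  intro t ht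
  refine image_le_of_deriv_right_lt_deriv_boundary (f' := fun x => k x - b * u x)
    (fun x hx => ?_) (fun x hx => ?_) (by simp [B]) hB (fun x hx hux => ?_) ⟨ht, le_rfl⟩
  · exact (hu x hx.1).continuousWithinAt.mono Set.Icc_subset_Ici_self
  · exact (hu x hx.1).mono (Set.Ici_subset_Ici.mpr hx.1)
  · rw [hux]
    linarith [hk x hx.1]

theorem tendsto_zero_of_hasDerivWithinAt_sub_mul {u k : ℝ → ℝ} {a b : ℝ} (hb : 0 < b)
    (hu : ∀ t, a ≤ t → HasDerivWithinAt u (k t - b * u t) (Set.Ici a) t)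
    (hk : Tendsto k atTop (nhds 0)) : Tendsto u atTop (nhds 0) := by
  rw [Metric.tendsto_nhds]
  intro ε hε
  obtain ⟨T₀, hkT₀⟩ := eventually_atTop.mp
    ((Metric.tendsto_nhds.mp hk) (b * (ε / 2)) (by positivity))
  set T := max T₀ a
  have huT : ∀ t, T ≤ t → HasDerivWithinAt u (k t - b * u t) (Set.Ici T) t := fun t ht =>
    (hu t ((le_max_right T₀ a).trans ht)).mono (Set.Ici_subset_Ici.mpr (le_max_right T₀ a))
  have hkT : ∀ t, T ≤ t → |k t| < b * (ε / 2) := fun t ht => by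
    simpa using hkT₀ t ((le_max_left T₀ a).trans ht)
  have upper := le_of_hasDerivWithinAt_sub_mul_of_lt (c := ε / 2) huT
    fun t ht => (abs_lt.mp (hkT t ht)).2
  have lower := le_of_hasDerivWithinAt_sub_mul_of_lt (u := fun t => -u t) (k := fun t => -k t)
    (c := ε / 2) (fun t ht => (huT t ht).neg.congr_deriv (by ring))
    fun t ht => by linarith [(abs_lt.mp (hkT t ht)).1]
  have decay : Tendsto (fun t => (|u T| + ε / 2) * exp (-(b * (t - T)))) atTop (nhds 0) := by
    have := tendsto_exp_neg_atTop_nhds_zero.comp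
      ((tendsto_atTop_add_const_right atTop (-T) tendsto_id).const_mul_atTop hb)
    simpa [sub_eq_add_neg] using this.const_mul (|u T| + ε / 2)
  filter_upwards [eventually_ge_atTop T, decay.eventually (gt_mem_nhds (half_pos hε))]
    with t ht hdecay
  have he : 0 ≤ exp (-(b * (t - T))) := (exp_pos _).le
  have hupper := upper t ht
  have hlower := lower t ht
  rw [Real.dist_0_eq_abs, abs_lt]
  constructor <;> nlinarith [le_abs_self (u T), neg_abs_le (u T)]

theorem tendsto_div_of_hasDerivWithinAt_sub_mul {f h : ℝ → ℝ} {a b L : ℝ} (hb : 0 < b)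
    (hf : ∀ t, a ≤ t → HasDerivWithinAt f (h t - b * f t) (Set.Ici a) t)
    (hh : Tendsto h atTop (nhds L)) : Tendsto f atTop (nhds (L / b)) := by
  have := tendsto_zero_of_hasDerivWithinAt_sub_mul (u := fun t => f t - L / b)
    (k := fun t => h t - L) hb
    (fun t ht => ((hf t ht).sub_const (L / b)).congr_deriv (by field_simp; ring))
    (by simpa using hh.sub_const L)
  simpa using this.add_const (L / b)

/-- The limit of `gⁿ`, with `s` standing for `σ̃ = 2σ/γ`. -/
noncomputable def sampleEquilibrium (s n : ℝ) : ℝ :=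
  Gamma n * Gamma (s + 1) / Gamma (s + n)

theorem sampleEquilibrium_one {s : ℝ} (hs : -1 < s) : sampleEquilibrium s 1 = 1 := by
  have := (Gamma_pos_of_pos (show 0 < s + 1 by linarith)).ne'
  simp [sampleEquilibrium, this]

theorem sampleEquilibrium_add_one {s x : ℝ} (hx : x ≠ 0) (hsx : s + x ≠ 0) :
    sampleEquilibrium s (x + 1) = x / (s + x) * sampleEquilibrium s x := by
  rw [sampleEquilibrium, sampleEquilibrium, Gamma_add_one hx, ← add_assoc, Gamma_add_one hsx,
    div_mul_div_comm, mul_assoc]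

/-- Long-time behavior of the mean sample Laplace transforms of subtree lengths under the
tree-valued Fleming–Viot dynamics with resampling rate `γ`: if `g¹ ≡ 1` and
`d/dt gⁿ = (γ/2)n(n−1)g^{n−1} − (γ/2)n(σ̃+n−1)gⁿ` on `[0,∞)` for all `n ≥ 2`, where
`σ̃ = 2σ/γ`, then `gⁿ(t) → Γ(n)Γ(σ̃+1)/Γ(σ̃+n)` as `t → ∞`. -/
theorem meanSampleLaplace_tendsto_equilibrium
    (γ σ : ℝ) (hγ : 0 < γ) (hσ : 0 < σ)
    (g : ℕ → ℝ → ℝ)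
    (hg1 : ∀ t : ℝ, 0 ≤ t → g 1 t = 1)
    (hode : ∀ n : ℕ, 2 ≤ n → ∀ t : ℝ, 0 ≤ t →
      HasDerivWithinAt (g n)
        (γ / 2 * (n : ℝ) * ((n : ℝ) - 1) * g (n - 1) t
          - γ / 2 * (n : ℝ) * (2 * σ / γ + (n : ℝ) - 1) * g n t)
        (Set.Ici 0) t)
    (n : ℕ) (hn : 2 ≤ n) :
    Tendsto (fun t => g n t) atTop
      (nhds (Real.Gamma n * Real.Gamma (2 * σ / γ + 1) / Real.Gamma (2 * σ / γ + n))) := by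
  set s := 2 * σ / γ
  have hs : 0 < s := by positivity
  suffices ∀ m, 1 ≤ m → Tendsto (g m) atTop (nhds (sampleEquilibrium s m)) from
    this n (by omega)
  intro m hm
  induction m, hm using Nat.le_induction with
  | base =>
    rw [Nat.cast_one, sampleEquilibrium_one (by linarith)]
    exact tendsto_const_nhds.congr' (eventually_ge_atTop 0 |>.mono fun t ht => (hg1 t ht).symm)
  | succ m hm ih =>
    have hm' : (0 : ℝ) < m := by exact_mod_cast hm
    have hb : 0 < γ / 2 * (m + 1) * (s + m) := by positivity
    have hlim := tendsto_div_of_hasDerivWithinAt_sub_mul hb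
      (fun t ht => (hode (m + 1) (by omega) t ht).congr_deriv
        (by rw [Nat.add_sub_cancel]; push_cast; ring))
      (ih.const_mul (γ / 2 * (m + 1) * m))
    convert hlim using 2
    rw [Nat.cast_succ, sampleEquilibrium_add_one hm'.ne' (by positivity)]
    field_simp
end
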